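/- The set of eigenvalues of the adjacency matrix A(X_N) equals the set { ε·|χ(v₁) + χ(v₂) + χ(v₁)χ(v₂)| : χ a character of A, ε ∈ {1, −1} }. -/

import Mathlib

/-- The action of `ℤ/2ℤ` on a commutative group `M` in which the nontrivial element
acts by inversion (negation, in additive language). -/
def negAct (M : Type*) [CommGroup M] : Multiplicative (ZMod 2) →* MulAut M where
  toFun g := if Multiplicative.toAdd g = 0 then 1 else MulEquiv.inv M
  map_one' := by simp
  map_mul' g h := by
    have hinv : MulEquiv.inv M * MulEquiv.inv M = 1 := by
      ext x; simp
    by_cases hg : Multiplicative.toAdd g = 0 <;> by_cases hh : Multiplicative.toAdd h = 0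
    · simp [hg, hh]
    · simp [hg, hh]
    · simp [hg, hh]
    · have h1 : ∀ x : ZMod 2, x ≠ 0 → x = 1 := by decide
      have h2 : (1 : ZMod 2) + 1 = 0 := by decide
      have : Multiplicative.toAdd (g * h) = 0 := by
        simp [h1 _ hg, h1 _ hh, h2]
      simp [this, hg, hh, hinv]

/-- A semidirect product of finite groups is finite. -/
def sdpEquivProd {N G : Type*} [Group N] [Group G] (φ : G →* MulAut N) :
    (N ⋊[φ] G) ≃ N × G where
  toFun x := (x.left, x.right)
  invFun p := ⟨p.1, p.2⟩
  left_inv x := rfl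
  right_inv p := rfl

instance instFintypeSdp {N G : Type*} [Group N] [Group G] [Fintype N] [Fintype G]
    {φ : G →* MulAut N} : Fintype (N ⋊[φ] G) :=
  Fintype.ofEquiv (N × G) (sdpEquivProd φ).symm

/-!
Left translations by `A ⊆ A ⋊ ℤ/2` commute with the adjacency operator `v ↦ ∑ₛ v (g s)`. Hence,
by Fourier inversion on `A`, every eigenvector has a nonzero projection onto some character `χ`
of `A`, and that projection is still an eigenvector, now of the form `mk x t ↦ χ x · (α or β)`.
On such functions the reflections `mk y 1`, `y ∈ T`, act on `(α, β)` by `!![0, P; conj P, 0]`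
with `P = ∑_{y ∈ T} χ y`, whose eigenvalues are `±‖P‖`; conversely each eigenvector of this
`2 × 2` matrix gives an eigenvector of the graph.
-/

open Multiplicative ComplexConjugate Matrix

section Cayley

variable (R : Type*) [NonAssocSemiring R] {G : Type*} [Group G] [Fintype G] [DecidableEq G]

def cayleyAdj (S : Finset G) : Matrix G G R :=
  Matrix.of fun g h => if g⁻¹ * h ∈ S then 1 else 0

variable {R}

lemma cayleyAdj_mulVec_apply (S : Finset G) (v : G → R) (g : G) :
    (cayleyAdj R S *ᵥ v) g = ∑ s ∈ S, v (g * s) := by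
  simp only [cayleyAdj, Matrix.mulVec, dotProduct, Matrix.of_apply, ite_mul, one_mul, zero_mul]
  rw [← Fintype.sum_equiv (Equiv.mulLeft g) (fun s => if s ∈ S then v (g * s) else 0) _
    (fun s => by simp), Finset.sum_ite_mem, Finset.univ_inter]

end Cayley

abbrev GenDihedral (A : Type*) [AddCommGroup A] :=
  Multiplicative A ⋊[negAct (Multiplicative A)] Multiplicative (ZMod 2)

namespace GenDihedral

variable {A : Type*} [AddCommGroup A]

def mk (x : A) (t : ZMod 2) : GenDihedral A := ⟨ofAdd x, ofAdd t⟩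

lemma exists_eq_mk_zero_or_mk_one (g : GenDihedral A) : ∃ x, g = mk x 0 ∨ g = mk x 1 := by
  refine ⟨toAdd g.left, ?_⟩
  have : ∀ t : ZMod 2, t = 0 ∨ t = 1 := by decide
  rcases this (toAdd g.right) with h | h <;> [left; right] <;> rw [← h] <;> rfl

lemma mk_mul_mk (x y : A) (t u : ZMod 2) :
    mk x t * mk y u = mk (x + if t = 0 then y else -y) (t + u) := by
  refine SemidirectProduct.ext ?_ rfl
  rw [SemidirectProduct.mul_left]
  by_cases ht : t = 0 <;> simp [mk, negAct, ht]

lemma mk_zero_mul_mk (x y : A) (t : ZMod 2) : mk x 0 * mk y t = mk (x + y) t := by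
  simp [mk_mul_mk]

lemma mk_one_mul_mk_one (x y : A) : mk x 1 * mk y 1 = mk (x - y) 0 := by
  simp [mk_mul_mk, sub_eq_add_neg, show (1 + 1 : ZMod 2) = 0 from rfl]

lemma mk_zero_zero : mk (0 : A) 0 = 1 := rfl

def reflections (T : Finset A) : Finset (GenDihedral A) :=
  T.map ⟨fun y => mk y 1, fun y z h => by simpa [mk] using congrArg SemidirectProduct.left h⟩

lemma sum_reflections {M : Type*} [AddCommMonoid M] (T : Finset A) (f : GenDihedral A → M) :
    ∑ s ∈ reflections T, f s = ∑ y ∈ T, f (mk y 1) :=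
  Finset.sum_map _ _ _

section Characters

variable (χ : AddChar A ℂ)

def charFun (α β : ℂ) (g : GenDihedral A) : ℂ :=
  χ (toAdd g.left) * if toAdd g.right = 0 then α else β

@[simp] lemma charFun_mk_zero (α β : ℂ) (x : A) : charFun χ α β (mk x 0) = χ x * α := by
  simp [charFun, mk]

@[simp] lemma charFun_mk_one (α β : ℂ) (x : A) : charFun χ α β (mk x 1) = χ x * β := by
  simp [charFun, mk]

lemma charFun_inj {α β α' β' : ℂ} :
    charFun χ α β = charFun χ α' β' ↔ α = α' ∧ β = β' := by
  refine ⟨fun h => ⟨?_, ?_⟩, fun h => by rw [h.1, h.2]⟩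
  · simpa using congrFun h (mk 0 0)
  · simpa using congrFun h (mk 0 1)

lemma charFun_zero : charFun χ 0 0 = 0 := by
  funext g; simp [charFun]

lemma smul_charFun (c α β : ℂ) : c • charFun χ α β = charFun χ (c * α) (c * β) := by
  funext g; simp only [charFun, Pi.smul_apply, smul_eq_mul]; split_ifs <;> ring

variable [Fintype A]

lemma cayleyAdj_reflections_mulVec_charFun [DecidableEq A] (T : Finset A) (α β : ℂ) :
    cayleyAdj ℂ (reflections T) *ᵥ charFun χ α β =
      charFun χ ((∑ y ∈ T, χ y) * β) (conj (∑ y ∈ T, χ y) * α) := by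
  funext g
  obtain ⟨x, rfl | rfl⟩ := exists_eq_mk_zero_or_mk_one g <;>
    rw [cayleyAdj_mulVec_apply, sum_reflections]
  · simp [mk_zero_mul_mk, AddChar.map_add_eq_mul, Finset.mul_sum, Finset.sum_mul, mul_assoc]
  · simp [mk_one_mul_mk_one, sub_eq_add_neg, AddChar.map_add_eq_mul, AddChar.map_neg_eq_conj,
      map_sum, Finset.mul_sum, Finset.sum_mul, mul_assoc]

def charProj (v : GenDihedral A → ℂ) (g : GenDihedral A) : ℂ :=
  ∑ x, χ (-x) * v (mk x 0 * g)

lemma charProj_mk (v : GenDihedral A → ℂ) (x : A) (t : ZMod 2) :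
    charProj χ v (mk x t) = χ x * charProj χ v (mk 0 t) := by
  simp only [charProj, mk_zero_mul_mk, add_zero, Finset.mul_sum]
  refine Fintype.sum_equiv (Equiv.addRight x) _ _ fun y => ?_
  have hx : χ x * χ (-x) = 1 := by
    rw [← AddChar.map_add_eq_mul, add_neg_cancel, AddChar.map_zero_eq_one]
  simp only [Equiv.coe_addRight, neg_add, AddChar.map_add_eq_mul]
  linear_combination (-(χ (-y) * v (mk (y + x) t))) * hx

lemma charProj_eq_charFun (v : GenDihedral A → ℂ) :
    charProj χ v = charFun χ (charProj χ v (mk 0 0)) (charProj χ v (mk 0 1)) := by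
  funext g
  obtain ⟨x, rfl | rfl⟩ := exists_eq_mk_zero_or_mk_one g <;> simp [charProj_mk χ v x]

lemma charProj_smul (c : ℂ) (v : GenDihedral A → ℂ) : charProj χ (c • v) = c • charProj χ v := by
  funext g
  simp only [charProj, Pi.smul_apply, smul_eq_mul, Finset.mul_sum]
  exact Finset.sum_congr rfl fun x _ => mul_left_comm _ _ _

lemma charProj_cayleyAdj_mulVec [DecidableEq A] (S : Finset (GenDihedral A))
    (v : GenDihedral A → ℂ) :
    charProj χ (cayleyAdj ℂ S *ᵥ v) = cayleyAdj ℂ S *ᵥ charProj χ v := by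
  funext g
  simp only [charProj, cayleyAdj_mulVec_apply, Finset.mul_sum, mul_assoc]
  exact Finset.sum_comm

end Characters

variable [Fintype A]

lemma sum_charProj [DecidableEq A] (v : GenDihedral A → ℂ) (g : GenDihedral A) :
    ∑ χ : AddChar A ℂ, charProj χ v g = Fintype.card A * v g := by
  simp only [charProj, Finset.sum_comm (γ := AddChar A ℂ), ← Finset.sum_mul,
    AddChar.sum_apply_eq_ite, neg_eq_zero, ite_mul, zero_mul, Finset.sum_ite_eq', Finset.mem_univ,
    if_true, mk_zero_zero, one_mul]

lemma exists_charProj_ne_zero {v : GenDihedral A → ℂ} (hv : v ≠ 0) :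
    ∃ χ : AddChar A ℂ, charProj χ v ≠ 0 := by
  classical
  by_contra! h
  obtain ⟨g, hg⟩ := Function.ne_iff.mp hv
  have := sum_charProj v g
  simp only [h, Pi.zero_apply, Finset.sum_const_zero] at this
  exact hg (by simpa using this.symm)

end GenDihedral

lemma AddChar.exists_iff_exists_map_add_eq_mul {A : Type*} [AddLeftCancelMonoid A] [Finite A]
    (p : (A → ℂ) → Prop) :
    (∃ χ : AddChar A ℂ, p χ) ↔
      ∃ χ : A → ℂ, (∀ x y, χ (x + y) = χ x * χ y) ∧ (∀ x, ‖χ x‖ = 1) ∧ p χ := by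
  refine ⟨fun ⟨χ, hχ⟩ => ⟨χ, χ.map_add_eq_mul, χ.norm_apply, hχ⟩, fun ⟨χ, hadd, hnorm, hχ⟩ => ?_⟩
  have hχ0 : χ 0 = 1 := by
    have h00 : χ 0 * χ 0 = χ 0 * 1 := by rw [← hadd, add_zero, mul_one]
    exact mul_left_cancel₀ (norm_ne_zero_iff.mp (by rw [hnorm]; exact one_ne_zero)) h00
  exact ⟨⟨χ, hχ0, hadd⟩, hχ⟩

/-- `(α, β)` is an eigenvector of `!![0, P; conj P, 0]` with eigenvalue `μ`. -/
lemma exists_antidiag_eigenvector_iff (P μ : ℂ) :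
    (∃ α β : ℂ, (α ≠ 0 ∨ β ≠ 0) ∧ P * β = μ * α ∧ conj P * α = μ * β) ↔
      μ = ‖P‖ ∨ μ = -‖P‖ := by
  have hPP : conj P * P = (‖P‖ : ℂ) ^ 2 := by
    rw [mul_comm, Complex.mul_conj, Complex.normSq_eq_norm_sq, Complex.ofReal_pow]
  rw [← sq_eq_sq_iff_eq_or_eq_neg]
  constructor
  · rintro ⟨α, β, hαβ | hαβ, h1, h2⟩
    · have h : (μ ^ 2 - (‖P‖ : ℂ) ^ 2) * α = 0 := by
        linear_combination (-μ) * h1 - P * h2 + α * hPP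
      exact sub_eq_zero.mp ((mul_eq_zero.mp h).resolve_right hαβ)
    · have h : (μ ^ 2 - (‖P‖ : ℂ) ^ 2) * β = 0 := by
        linear_combination (-conj P) * h1 - μ * h2 + β * hPP
      exact sub_eq_zero.mp ((mul_eq_zero.mp h).resolve_right hαβ)
  · intro hμ
    by_cases hP : P = 0
    · have hμ0 : μ = 0 := by simpa [hP] using hμ
      exact ⟨1, 0, .inl one_ne_zero, by simp [hP, hμ0], by simp [hP, hμ0]⟩
    · exact ⟨P, μ, .inl hP, mul_comm P μ, by rw [hPP, ← hμ, sq]⟩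

namespace GenDihedral

theorem eigenvalues_cayleyAdj_reflections {A : Type*} [AddCommGroup A] [Fintype A]
    [DecidableEq A] (T : Finset A) :
    {μ : ℂ | ∃ v, v ≠ 0 ∧ cayleyAdj ℂ (reflections T) *ᵥ v = μ • v} =
      {μ : ℂ | ∃ χ : AddChar A ℂ, μ = ‖∑ y ∈ T, χ y‖ ∨ μ = -‖∑ y ∈ T, χ y‖} := by
  ext μ
  constructor
  · rintro ⟨v, hv, hμ⟩
    obtain ⟨χ, hχ⟩ := exists_charProj_ne_zero hv
    refine ⟨χ, (exists_antidiag_eigenvector_iff _ μ).mp ?_⟩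
    have hw := congrArg (charProj χ) hμ
    rw [charProj_cayleyAdj_mulVec, charProj_smul, charProj_eq_charFun,
      cayleyAdj_reflections_mulVec_charFun, smul_charFun, charFun_inj] at hw
    rw [charProj_eq_charFun, Ne, ← charFun_zero χ, charFun_inj, not_and_or] at hχ
    exact ⟨_, _, hχ, hw⟩
  · rintro ⟨χ, hμ⟩
    obtain ⟨α, β, hαβ, h1, h2⟩ := (exists_antidiag_eigenvector_iff _ μ).mpr hμ
    refine ⟨charFun χ α β, ?_, ?_⟩
    · rwa [Ne, ← charFun_zero χ, charFun_inj, not_and_or]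
    · rw [cayleyAdj_reflections_mulVec_charFun, smul_charFun, h1, h2]

end GenDihedral

open scoped Classical in
theorem stmt_10 (N : AddSubgroup (ℤ × ℤ)) [Fintype ((ℤ × ℤ) ⧸ N)]
    (h1 : (QuotientAddGroup.mk ((1, 0) : ℤ × ℤ) : (ℤ × ℤ) ⧸ N) ≠ 0)
    (h2 : (QuotientAddGroup.mk ((0, 1) : ℤ × ℤ) : (ℤ × ℤ) ⧸ N) ≠ 0)
    (h12 : (QuotientAddGroup.mk ((1, 0) : ℤ × ℤ) : (ℤ × ℤ) ⧸ N) ≠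
      QuotientAddGroup.mk ((0, 1) : ℤ × ℤ)) :
    let A := (ℤ × ℤ) ⧸ N
    let v₁ : A := QuotientAddGroup.mk (1, 0)
    let v₂ : A := QuotientAddGroup.mk (0, 1)
    let G := Multiplicative A ⋊[negAct (Multiplicative A)] Multiplicative (ZMod 2)
    let s : Multiplicative (ZMod 2) := Multiplicative.ofAdd 1
    let a : G := ⟨Multiplicative.ofAdd v₁, s⟩
    let b : G := ⟨Multiplicative.ofAdd (v₁ + v₂), s⟩
    let c : G := ⟨Multiplicative.ofAdd v₂, s⟩
    let Adj : Matrix G G ℂ :=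
      fun g h => if g⁻¹ * h = a ∨ g⁻¹ * h = b ∨ g⁻¹ * h = c then 1 else 0
    {lam : ℂ | ∃ v : G → ℂ, v ≠ 0 ∧ Adj.mulVec v = lam • v} =
      {lam : ℂ | ∃ χ : A → ℂ,
        (∀ x y, χ (x + y) = χ x * χ y) ∧ (∀ x, ‖χ x‖ = 1) ∧
        ∃ ε : ℂ, (ε = 1 ∨ ε = -1) ∧
          lam = ε * ‖χ v₁ + χ v₂ + χ v₁ * χ v₂‖} := by
  intro A v₁ v₂ G s a b c Adj
  have hAdj : Adj = cayleyAdj ℂ (GenDihedral.reflections {v₁, v₁ + v₂, v₂}) := by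
    ext g h
    simp [Adj, cayleyAdj, GenDihedral.reflections, GenDihedral.mk, a, b, c, s]
  have hP (χ : AddChar A ℂ) :
      ∑ y ∈ {v₁, v₁ + v₂, v₂}, χ y = χ v₁ + χ v₂ + χ v₁ * χ v₂ := by
    have hv₁ : v₁ ∉ ({v₁ + v₂, v₂} : Finset A) := by
      simpa only [Finset.mem_insert, Finset.mem_singleton, not_or, left_eq_add] using ⟨h2, h12⟩
    rw [Finset.sum_insert hv₁, Finset.sum_pair fun h => h1 (add_eq_right.mp h),
      AddChar.map_add_eq_mul]
    ring
  have hsign (μ r : ℂ) : (∃ ε : ℂ, (ε = 1 ∨ ε = -1) ∧ μ = ε * r) ↔ μ = r ∨ μ = -r := by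
    simp [or_and_right, exists_or]
  rw [hAdj, GenDihedral.eigenvalues_cayleyAdj_reflections]
  ext μ
  simp only [Set.mem_ofPred_eq, hP, hsign]
  exact AddChar.exists_iff_exists_map_add_eq_mul fun χ =>
    μ = ‖χ v₁ + χ v₂ + χ v₁ * χ v₂‖ ∨ μ = -‖χ v₁ + χ v₂ + χ v₁ * χ v₂‖
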